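/- arXiv:1705.01433 — 3 statements merged into one kernel-verified Lean document; each statement's English description precedes it below -/
import Mathlib

section
/- Consider a strongly-connected Büchi bidding game S = (V, E) with a set F ⊆ V of accepting vertices, where Player 1 wins an infinite outcome iff it visits F infinitely often. If S contains a cycle C that does not traverse any vertex of F, then for every k ∈ ℕ and every strictly positive initial budget of Player 2 (however small), Player 2 has a strategy that forces the token to traverse the cycle C k times without visiting any vertex of F; in particular, no accepting vertex is visited for at least k rounds. -/
open scoped Classical

/-! ### Bidding games: the basic model -/

/-- One round of a bidding game: the vertex the token was moved to, the winning bid,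
and whether Player 1 won the bidding. -/
structure BidRound (V : Type) where
  dest : V
  bid : ℝ
  p1Won : Bool

/-- A history: the initial vertex together with the list of rounds played so far. -/
structure Hist (V : Type) where
  init : V
  rounds : List (BidRound V)

/-- The vertex currently occupied by the token. -/
def Hist.cur {V : Type} (h : Hist V) : V :=
  h.rounds.getLast?.elim h.init BidRound.dest

/-- The net payment of Player 1 so far (bids paid upon winning minus bids received). -/
def Hist.pay1 {V : Type} (h : Hist V) : ℝ :=
  (h.rounds.map (fun r => if r.p1Won then r.bid else -r.bid)).sum

/-- The net payment of Player 2 so far. -/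
def Hist.pay2 {V : Type} (h : Hist V) : ℝ := -h.pay1

/-- The sum of the weights of all vertices visited so far (including the current one). -/
def Hist.energyAll {V : Type} (w : V → ℤ) (h : Hist V) : ℤ :=
  w h.init + (h.rounds.map (fun r => w r.dest)).sum

/-- A strategy: maps a history to a bid and the vertex to move to upon winning. -/
def Strat (V : Type) := Hist V → ℝ × V

/-- A tie-breaking mechanism: decides at each history whether Player 1 wins a tie. -/
def TieBreak (V : Type) := Hist V → Bool

/-- A bidding game: a finite directed graph in which every vertex has an outgoing edge. -/
structure BiddingGame (V : Type) [Fintype V] where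
  E : V → V → Prop
  total : ∀ v, ∃ u, E v u

/-- One round of play: both players bid; the higher bidder (Player 1 upon a tie won by
the tie-breaking mechanism) pays his bid to the other player and moves the token. -/
noncomputable def extend {V : Type} (tb : TieBreak V) (f1 f2 : Strat V) (h : Hist V) : Hist V :=
  if (f2 h).1 < (f1 h).1 ∨ ((f1 h).1 = (f2 h).1 ∧ tb h = true) then
    ⟨h.init, h.rounds ++ [⟨(f1 h).2, (f1 h).1, true⟩]⟩
  else
    ⟨h.init, h.rounds ++ [⟨(f2 h).2, (f2 h).1, false⟩]⟩

/-- The history after `n` rounds, starting at `v0`. -/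
noncomputable def play {V : Type} (tb : TieBreak V) (f1 f2 : Strat V) (v0 : V) : ℕ → Hist V
  | 0 => ⟨v0, []⟩
  | n + 1 => extend tb f1 f2 (play tb f1 f2 v0 n)

/-- The vertex occupied after `n` rounds. -/
noncomputable def visit {V : Type} (tb : TieBreak V) (f1 f2 : Strat V) (v0 : V) (n : ℕ) : V :=
  (play tb f1 f2 v0 n).cur

/-- The energy (sum of weights) of the prefix of length `n` of the outcome. -/
noncomputable def energy {V : Type} (w : V → ℤ) (tb : TieBreak V) (f1 f2 : Strat V) (v0 : V)
    (n : ℕ) : ℤ :=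
  ∑ i ∈ Finset.range n, w (visit tb f1 f2 v0 i)

/-- Player 1's strategy is legal w.r.t. the initial budget `B`: along any play, his bids
are nonnegative, never exceed his current budget, and his moves follow edges. -/
def Legal1 {V : Type} [Fintype V] (G : BiddingGame V) (f1 : Strat V) (B : ℝ) : Prop :=
  ∀ (tb : TieBreak V) (f2 : Strat V) (v0 : V) (n : ℕ),
    0 ≤ (f1 (play tb f1 f2 v0 n)).1 ∧
    (f1 (play tb f1 f2 v0 n)).1 ≤ B - (play tb f1 f2 v0 n).pay1 ∧
    G.E (play tb f1 f2 v0 n).cur (f1 (play tb f1 f2 v0 n)).2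

/-- Player 2's strategy is legal w.r.t. the initial budget `B`. -/
def Legal2 {V : Type} [Fintype V] (G : BiddingGame V) (f2 : Strat V) (B : ℝ) : Prop :=
  ∀ (tb : TieBreak V) (f1 : Strat V) (v0 : V) (n : ℕ),
    0 ≤ (f2 (play tb f1 f2 v0 n)).1 ∧
    (f2 (play tb f1 f2 v0 n)).1 ≤ B - (play tb f1 f2 v0 n).pay2 ∧
    G.E (play tb f1 f2 v0 n).cur (f2 (play tb f1 f2 v0 n)).2

/-- A memoryless strategy: its action depends only on the current vertex and the
player's current budget (equivalently, the net payments so far). -/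
def Memoryless {V : Type} (f : Strat V) : Prop :=
  ∀ h h' : Hist V, h.cur = h'.cur → h.pay1 = h'.pay1 → f h = f h'

/-- A memoryless strategy in a mean-payoff game: its action depends only on the current
vertex, the player's current budget, and the current energy level. -/
def MemorylessE {V : Type} (w : V → ℤ) (f : Strat V) : Prop :=
  ∀ h h' : Hist V, h.cur = h'.cur → h.pay1 = h'.pay1 →
    h.energyAll w = h'.energyAll w → f h = f h'

/-- A constant-memory strategy for Player 2 (Max): the action depends only on the current
vertex, Player 2's current budget, the current energy level, and a memory state ranging
over a finite set (of size independent of the history), updated round by round. -/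
def FiniteMemory2 {V : Type} (w : V → ℤ) (f : Strat V) (B : ℝ) : Prop :=
  ∃ (M : Type) (_ : Fintype M) (m0 : M) (upd : M → BidRound V → M)
    (act : V → ℝ → ℤ → M → ℝ × V),
    ∀ h : Hist V, f h = act h.cur (B - h.pay2) (h.energyAll w) (h.rounds.foldl upd m0)

/-- Strong connectivity of the arena. -/
def StronglyConnected {V : Type} [Fintype V] (G : BiddingGame V) : Prop :=
  ∀ v u : V, Relation.ReflTransGen G.E v u

/-! ### Richman games -/

/-- The successors of `v`. -/
noncomputable def BiddingGame.adj {V : Type} [Fintype V] (G : BiddingGame V) (v : V) :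
    Finset V :=
  Finset.univ.filter (fun u => G.E v u)

lemma BiddingGame.adj_nonempty {V : Type} [Fintype V] (G : BiddingGame V) (v : V) :
    (G.adj v).Nonempty := by
  obtain ⟨u, hu⟩ := G.total v
  exact ⟨u, by simpa [BiddingGame.adj] using hu⟩

/-- The Richman function `R(v, i)`. -/
noncomputable def Rfun {V : Type} [Fintype V] (G : BiddingGame V) (vR vS : V) :
    ℕ → V → ℝ
  | 0, v => if v = vR then 0 else 1
  | i + 1, v =>
      if v = vR then 0
      else if v = vS then 1
      else ((G.adj v).sup' (G.adj_nonempty v) (Rfun G vR vS i) +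
            (G.adj v).inf' (G.adj_nonempty v) (Rfun G vR vS i)) / 2

/-- The limit Richman function `R(v) = lim_i R(v, i)`; since `i ↦ R(v, i)` is
nonincreasing, the limit equals the infimum. -/
noncomputable def Rlim {V : Type} [Fintype V] (G : BiddingGame V) (vR vS : V)
    (v : V) : ℝ :=
  ⨅ i : ℕ, Rfun G vR vS i v

/-- Player 1 wins an outcome of a Richman game: `vR` is reached, and `vS` is not
reached before that (the game ends once a target is reached). -/
def Win1Richman {V : Type} (tb : TieBreak V) (f1 f2 : Strat V) (v0 vR vS : V) : Prop :=
  ∃ n, visit tb f1 f2 v0 n = vR ∧ ∀ m < n, visit tb f1 f2 v0 m ≠ vS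

/-- Player 2 wins an outcome of a Richman game: `vS` is reached first, or no target is
ever reached. -/
def Win2Richman {V : Type} (tb : TieBreak V) (f1 f2 : Strat V) (v0 vR vS : V) : Prop :=
  (∃ n, visit tb f1 f2 v0 n = vS ∧ ∀ m < n, visit tb f1 f2 v0 m ≠ vR) ∨
  (∀ n, visit tb f1 f2 v0 n ≠ vR ∧ visit tb f1 f2 v0 n ≠ vS)

/-- Player 1 has a winning strategy in the Richman game from `v0` with budget `B`. -/
def Win1RichmanFrom {V : Type} [Fintype V] (G : BiddingGame V) (vR vS v0 : V)
    (B : ℝ) : Prop :=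
  ∀ tb : TieBreak V, ∃ f1 : Strat V, Legal1 G f1 B ∧
    ∀ f2 : Strat V, Legal2 G f2 (1 - B) → Win1Richman tb f1 f2 v0 vR vS

/-- Player 2 has a winning strategy in the Richman game from `v0` with budget `B`. -/
def Win2RichmanFrom {V : Type} [Fintype V] (G : BiddingGame V) (vR vS v0 : V)
    (B : ℝ) : Prop :=
  ∀ tb : TieBreak V, ∃ f2 : Strat V, Legal2 G f2 B ∧
    ∀ f1 : Strat V, Legal1 G f1 (1 - B) → Win2Richman tb f1 f2 v0 vR vS

/-- `t` is a threshold budget at `v` in the Richman game. -/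
def IsThreshRichman {V : Type} [Fintype V] (G : BiddingGame V) (vR vS v : V)
    (t : ℝ) : Prop :=
  (∀ B : ℝ, B ≤ 1 → t < B → Win1RichmanFrom G vR vS v B) ∧
  (∀ B : ℝ, B ≤ 1 → 1 - t < B → Win2RichmanFrom G vR vS v B)

/-! ### Richman games with target sets -/

def Win1RichmanSet {V : Type} (tb : TieBreak V) (f1 f2 : Strat V) (v0 : V)
    (R S : Set V) : Prop :=
  ∃ n, visit tb f1 f2 v0 n ∈ R ∧ ∀ m < n, visit tb f1 f2 v0 m ∉ S

def Win2RichmanSet {V : Type} (tb : TieBreak V) (f1 f2 : Strat V) (v0 : V)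
    (R S : Set V) : Prop :=
  (∃ n, visit tb f1 f2 v0 n ∈ S ∧ ∀ m < n, visit tb f1 f2 v0 m ∉ R) ∨
  (∀ n, visit tb f1 f2 v0 n ∉ R ∧ visit tb f1 f2 v0 n ∉ S)

/-- `t` is a threshold budget at `v` in the Richman game with target sets `R` and `S`. -/
def IsThreshRichmanSet {V : Type} [Fintype V] (G : BiddingGame V) (R S : Set V)
    (v : V) (t : ℝ) : Prop :=
  (∀ B : ℝ, B ≤ 1 → t < B → ∀ tb : TieBreak V, ∃ f1 : Strat V, Legal1 G f1 B ∧
      ∀ f2 : Strat V, Legal2 G f2 (1 - B) → Win1RichmanSet tb f1 f2 v R S) ∧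
  (∀ B : ℝ, B ≤ 1 → 1 - t < B → ∀ tb : TieBreak V, ∃ f2 : Strat V, Legal2 G f2 B ∧
      ∀ f1 : Strat V, Legal1 G f1 (1 - B) → Win2RichmanSet tb f1 f2 v R S)

/-! ### Reachability games -/

/-- `t` is a threshold budget at `v` in the reachability game with target set `T`. -/
def IsThreshReach {V : Type} [Fintype V] (G : BiddingGame V) (T : Set V) (v : V)
    (t : ℝ) : Prop :=
  (∀ B : ℝ, B ≤ 1 → t < B → ∀ tb : TieBreak V, ∃ f1 : Strat V, Legal1 G f1 B ∧
      ∀ f2 : Strat V, Legal2 G f2 (1 - B) → ∃ n, visit tb f1 f2 v n ∈ T) ∧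
  (∀ B : ℝ, B ≤ 1 → 1 - t < B → ∀ tb : TieBreak V, ∃ f2 : Strat V, Legal2 G f2 B ∧
      ∀ f1 : Strat V, Legal1 G f1 (1 - B) → ∀ n, visit tb f1 f2 v n ∉ T)

/-! ### Parity games -/

/-- Player 1 wins an outcome of a parity game: the maximal parity index visited
infinitely often is odd. -/
def Win1Parity {V : Type} (p : V → ℕ) (tb : TieBreak V) (f1 f2 : Strat V)
    (v0 : V) : Prop :=
  Odd (sSup {k : ℕ | ∀ N : ℕ, ∃ n ≥ N, p (visit tb f1 f2 v0 n) = k})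

def Win1ParityFrom {V : Type} [Fintype V] (G : BiddingGame V) (p : V → ℕ) (v0 : V)
    (B : ℝ) : Prop :=
  ∀ tb : TieBreak V, ∃ f1 : Strat V, Legal1 G f1 B ∧
    ∀ f2 : Strat V, Legal2 G f2 (1 - B) → Win1Parity p tb f1 f2 v0

def Win2ParityFrom {V : Type} [Fintype V] (G : BiddingGame V) (p : V → ℕ) (v0 : V)
    (B : ℝ) : Prop :=
  ∀ tb : TieBreak V, ∃ f2 : Strat V, Legal2 G f2 B ∧
    ∀ f1 : Strat V, Legal1 G f1 (1 - B) → ¬ Win1Parity p tb f1 f2 v0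

/-- `t` is a threshold budget at `v` in the parity game. -/
def IsThreshParity {V : Type} [Fintype V] (G : BiddingGame V) (p : V → ℕ) (v : V)
    (t : ℝ) : Prop :=
  (∀ B : ℝ, B ≤ 1 → t < B → Win1ParityFrom G p v B) ∧
  (∀ B : ℝ, B ≤ 1 → 1 - t < B → Win2ParityFrom G p v B)

/-! ### Mean-payoff games (Min is Player 1, Max is Player 2) -/

/-- The mean-payoff value of the outcome. -/
noncomputable def mpval {V : Type} (w : V → ℤ) (tb : TieBreak V) (f1 f2 : Strat V)
    (v0 : V) : ℝ :=
  Filter.liminf (fun n : ℕ => (energy w tb f1 f2 v0 n : ℝ) / n) Filter.atTop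

/-- Min can guarantee a nonpositive mean-payoff value from `v0` with budget `B`. -/
def MinWinsFrom {V : Type} [Fintype V] (G : BiddingGame V) (w : V → ℤ) (v0 : V)
    (B : ℝ) : Prop :=
  ∀ tb : TieBreak V, ∃ f1 : Strat V, Legal1 G f1 B ∧
    ∀ f2 : Strat V, Legal2 G f2 (1 - B) → mpval w tb f1 f2 v0 ≤ 0

/-- Max can guarantee a strictly positive mean-payoff value from `v0` with budget `B`. -/
def MaxWinsFrom {V : Type} [Fintype V] (G : BiddingGame V) (w : V → ℤ) (v0 : V)
    (B : ℝ) : Prop :=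
  ∀ tb : TieBreak V, ∃ f2 : Strat V, Legal2 G f2 B ∧
    ∀ f1 : Strat V, Legal1 G f1 (1 - B) → 0 < mpval w tb f1 f2 v0

/-- `t` is a threshold budget at `v` in the mean-payoff game. -/
def IsThreshMP {V : Type} [Fintype V] (G : BiddingGame V) (w : V → ℤ) (v : V)
    (t : ℝ) : Prop :=
  (∀ B : ℝ, B ≤ 1 → t < B → MinWinsFrom G w v B) ∧
  (∀ B : ℝ, B ≤ 1 → 1 - t < B → MaxWinsFrom G w v B)

/-! ### The split graph `G^u` and the weighted Richman function -/

/-- Edges of `G^u`: `u` is split into `u_s = Sum.inl u` (keeping the outgoing edges of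
`u`, with no incoming edges) and `u_t = Sum.inr ()` (receiving the edges into `u`, with
no outgoing edges). -/
def splitE {V : Type} [Fintype V] (G : BiddingGame V) (u : V) :
    V ⊕ Unit → V ⊕ Unit → Prop
  | Sum.inl v, Sum.inl x => G.E v x ∧ x ≠ u
  | Sum.inl v, Sum.inr _ => G.E v u
  | Sum.inr _, _ => False

/-- The successors in `G^u` of a vertex `v ∈ V` (i.e. of `Sum.inl v`). -/
noncomputable def succu {V : Type} [Fintype V] (G : BiddingGame V) (u v : V) :
    Finset (V ⊕ Unit) :=
  Finset.univ.filter (fun y => splitE G u (Sum.inl v) y)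

lemma succu_nonempty {V : Type} [Fintype V] (G : BiddingGame V) (u v : V) :
    (succu G u v).Nonempty := by
  obtain ⟨x, hx⟩ := G.total v
  by_cases hxu : x = u
  · refine ⟨Sum.inr (), ?_⟩
    simp only [succu, Finset.mem_filter, Finset.mem_univ, true_and]
    exact show G.E v u from hxu ▸ hx
  · refine ⟨Sum.inl x, ?_⟩
    simp only [succu, Finset.mem_filter, Finset.mem_univ, true_and]
    exact show G.E v x ∧ x ≠ u from ⟨hx, hxu⟩

/-- `W(v⁺)`: the maximal value of `W` over the `G^u`-successors of `v`. -/
noncomputable def supWu {V : Type} [Fintype V] (G : BiddingGame V) (u : V)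
    (W : V ⊕ Unit → ℝ) (v : V) : ℝ :=
  (succu G u v).sup' (succu_nonempty G u v) W

/-- `W(v⁻)`: the minimal value of `W` over the `G^u`-successors of `v`. -/
noncomputable def infWu {V : Type} [Fintype V] (G : BiddingGame V) (u : V)
    (W : V ⊕ Unit → ℝ) (v : V) : ℝ :=
  (succu G u v).inf' (succu_nonempty G u v) W

/-- `W` is a weighted Richman function for the weights `w`, split at `u`:
`W(u_t) = 0` and `W(v) = (W(v⁺) + W(v⁻))/2 + w(v)` for every `v ∈ V`
(`Sum.inl v` represents `v`, in particular `Sum.inl u` is `u_s`). -/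
def IsWRichman {V : Type} [Fintype V] (G : BiddingGame V) (w : V → ℝ) (u : V)
    (W : V ⊕ Unit → ℝ) : Prop :=
  W (Sum.inr ()) = 0 ∧
  ∀ v : V, W (Sum.inl v) = (supWu G u W v + infWu G u W v) / 2 + w v

/-- Projection of `G^u`-vertices back to vertices of `G`. -/
def projU {V : Type} (u : V) : V ⊕ Unit → V := Sum.elim id (fun _ => u)

/-- `w_M`: the maximal absolute value of `W` over `V`. -/
noncomputable def wMax {V : Type} [Fintype V] (W : V ⊕ Unit → ℝ) (u : V) : ℝ :=
  Finset.univ.sup' ⟨u, Finset.mem_univ u⟩ (fun v : V => |W (Sum.inl v)|)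

/-- `b_M`: the maximal value of the bid `(W(v⁺) − W(v⁻))/2` over `V`. -/
noncomputable def bMax {V : Type} [Fintype V] (G : BiddingGame V) (u : V)
    (W : V ⊕ Unit → ℝ) : ℝ :=
  Finset.univ.sup' ⟨u, Finset.mem_univ u⟩
    (fun v : V => (supWu G u W v - infWu G u W v) / 2)

/-!
Player 2 fixes, for every vertex `x`, a route from `x` to the cycle followed by `k` turns
around it, and follows the route from the current vertex. Within an attempt she bids
`δ, 2δ, 4δ, …` with `δ = B / 2 ^ N`, `N` the maximal route length, which she can always
afford.
When Player 1 wins a bidding she restarts from the new vertex: he has paid at least `2 ^ j δ`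
against the `(2 ^ j - 1) δ` she spent on the attempt, so every interruption costs him `δ` net.
Hence he can interrupt at most `1 / δ` attempts, and some attempt is completed.
-/

section Play

variable {V : Type}

def P1Wins (tb : TieBreak V) (f1 f2 : Strat V) (h : Hist V) : Prop :=
  (f2 h).1 < (f1 h).1 ∨ ((f1 h).1 = (f2 h).1 ∧ tb h = true)

noncomputable def roundAt (tb : TieBreak V) (f1 f2 : Strat V) (h : Hist V) : BidRound V :=
  if P1Wins tb f1 f2 h then ⟨(f1 h).2, (f1 h).1, true⟩ else ⟨(f2 h).2, (f2 h).1, false⟩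

variable {tb : TieBreak V} {f1 f2 : Strat V} {h : Hist V}

lemma roundAt_of_p1Wins (hw : P1Wins tb f1 f2 h) :
    roundAt tb f1 f2 h = ⟨(f1 h).2, (f1 h).1, true⟩ := if_pos hw

lemma roundAt_of_not_p1Wins (hw : ¬ P1Wins tb f1 f2 h) :
    roundAt tb f1 f2 h = ⟨(f2 h).2, (f2 h).1, false⟩ := if_neg hw

lemma P1Wins.bid_le (hw : P1Wins tb f1 f2 h) : (f2 h).1 ≤ (f1 h).1 := by
  rcases hw with hw | ⟨hw, -⟩
  exacts [hw.le, hw.ge]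

lemma extend_eq : extend tb f1 f2 h = ⟨h.init, h.rounds ++ [roundAt tb f1 f2 h]⟩ := by
  unfold extend roundAt P1Wins
  split_ifs <;> rfl

lemma cur_extend : (extend tb f1 f2 h).cur = (roundAt tb f1 f2 h).dest := by
  simp [extend_eq, Hist.cur]

lemma pay1_extend : (extend tb f1 f2 h).pay1 =
    h.pay1 + if (roundAt tb f1 f2 h).p1Won then (roundAt tb f1 f2 h).bid
      else -(roundAt tb f1 f2 h).bid := by
  simp [extend_eq, Hist.pay1]

lemma pay1_extend_of_p1Wins (hw : P1Wins tb f1 f2 h) :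
    (extend tb f1 f2 h).pay1 = h.pay1 + (f1 h).1 := by
  simp [pay1_extend, roundAt_of_p1Wins hw]

lemma pay1_extend_of_not_p1Wins (hw : ¬ P1Wins tb f1 f2 h) :
    (extend tb f1 f2 h).pay1 = h.pay1 - (f2 h).1 := by
  simp [pay1_extend, roundAt_of_not_p1Wins hw, sub_eq_add_neg]

lemma play_succ (v0 : V) (n : ℕ) :
    play tb f1 f2 v0 (n + 1) = extend tb f1 f2 (play tb f1 f2 v0 n) := rfl

lemma visit_succ (v0 : V) (n : ℕ) :
    visit tb f1 f2 v0 (n + 1) = (roundAt tb f1 f2 (play tb f1 f2 v0 n)).dest :=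
  cur_extend

lemma pay1_play_le [Fintype V] {G : BiddingGame V} {B₁ : ℝ} (hf1 : Legal1 G f1 B₁)
    (hf2 : ∀ h, 0 ≤ (f2 h).1) (v0 : V) (n : ℕ) : (play tb f1 f2 v0 n).pay1 ≤ B₁ := by
  induction n with
  | zero =>
    have := hf1 tb f2 v0 0
    simp only [play, Hist.pay1, List.map_nil, List.sum_nil] at this ⊢
    linarith
  | succ n ih =>
    rw [play_succ]
    by_cases hw : P1Wins tb f1 f2 (play tb f1 f2 v0 n)
    · rw [pay1_extend_of_p1Wins hw]
      linarith [(hf1 tb f2 v0 n).2.1]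
    · rw [pay1_extend_of_not_p1Wins hw]
      linarith [hf2 (play tb f1 f2 v0 n)]

def Follows (tb : TieBreak V) (f1 f2 : Strat V) (v0 : V) (m : ℕ) (l : List V) : Prop :=
  ∀ i (hi : i < l.length), visit tb f1 f2 v0 (m + i) = l[i]

lemma follows_singleton {v0 x : V} {n : ℕ} (hx : visit tb f1 f2 v0 n = x) :
    Follows tb f1 f2 v0 n [x] := by
  intro i hi
  obtain rfl : i = 0 := by simpa using hi
  exact hx

lemma Follows.take_succ {v0 : V} {m j : ℕ} {l : List V}
    (ht : Follows tb f1 f2 v0 m (l.take (j + 1))) (hj : j + 1 < l.length)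
    (hv : visit tb f1 f2 v0 (m + (j + 1)) = l[j + 1]) :
    Follows tb f1 f2 v0 m (l.take (j + 2)) := by
  intro i hi
  simp only [List.length_take] at hi
  rcases Nat.lt_or_ge i (j + 1) with hij | hij
  · rw [ht i (by simp; omega), List.getElem_take, List.getElem_take]
  · obtain rfl : i = j + 1 := by omega
    simpa using hv

end Play

structure RouteSystem {V : Type} [Fintype V] (G : BiddingGame V) where
  route : V → List V
  route_ne_nil : ∀ x, route x ≠ []
  isChain_route : ∀ x, (x :: route x).IsChain G.E

namespace RouteSystem

variable {V : Type} [Fintype V] {G : BiddingGame V} (R : RouteSystem G)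

noncomputable def maxLength : ℕ := Finset.univ.sup fun x => (R.route x).length

lemma length_route_le (x : V) : (R.route x).length ≤ R.maxLength :=
  Finset.le_sup (f := fun x => (R.route x).length) (Finset.mem_univ x)

noncomputable def unitBid (B : ℝ) : ℝ := B / 2 ^ R.maxLength

lemma unitBid_nonneg {B : ℝ} (hB : 0 ≤ B) : 0 ≤ R.unitBid B := by
  unfold unitBid; positivity

lemma two_pow_mul_unitBid_le {B : ℝ} (hB : 0 ≤ B) {j : ℕ} (hj : j ≤ R.maxLength) :
    2 ^ j * R.unitBid B ≤ B := by
  unfold unitBid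
  rw [mul_div_assoc', div_le_iff₀ (by positivity), mul_comm B]
  exact mul_le_mul_of_nonneg_right (pow_le_pow_right₀ one_le_two hj) hB

/-- Memory `some (x, j)`: the current attempt started at `x` and Player 2 has won its last
`j` biddings, moving along `R.route x`; `none`: some route has been completed. -/
def step : Option (V × ℕ) → BidRound V → Option (V × ℕ)
  | none, _ => none
  | some (x, j), r =>
    if r.p1Won then some (r.dest, 0)
    else if j + 1 < (R.route x).length then some (x, j + 1) else none

def memory (h : Hist V) : Option (V × ℕ) := h.rounds.foldl R.step (some (h.init, 0))

lemma memory_extend {tb : TieBreak V} {f1 f2 : Strat V} {h : Hist V} :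
    R.memory (extend tb f1 f2 h) = R.step (R.memory h) (roundAt tb f1 f2 h) := by
  simp [memory, extend_eq]

noncomputable def strategy (B : ℝ) : Strat V := fun h =>
  match R.memory h with
  | none => (0, (G.total h.cur).choose)
  | some (x, j) => (2 ^ j * R.unitBid B, (R.route x).getD j x)

lemma strategy_of_memory_none {B : ℝ} {h : Hist V} (hm : R.memory h = none) :
    R.strategy B h = (0, (G.total h.cur).choose) := by
  simp [strategy, hm]

lemma strategy_of_memory_some {B : ℝ} {h : Hist V} {x : V} {j : ℕ}
    (hm : R.memory h = some (x, j)) :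
    R.strategy B h = (2 ^ j * R.unitBid B, (R.route x).getD j x) := by
  simp [strategy, hm]

lemma strategy_bid_nonneg {B : ℝ} (hB : 0 ≤ B) (h : Hist V) : 0 ≤ (R.strategy B h).1 := by
  unfold strategy
  split
  · exact le_rfl
  · exact mul_nonneg (by positivity) (R.unitBid_nonneg hB)

-- `a` bounds the number of attempts Player 1 has interrupted so far.
def Invariant (B : ℝ) (tb : TieBreak V) (f1 : Strat V) (v0 : V) (n : ℕ) :
    Option (V × ℕ) → Prop
  | none => 0 ≤ B + (play tb f1 (R.strategy B) v0 n).pay1 ∧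
      ∃ x m, Follows tb f1 (R.strategy B) v0 m (x :: R.route x)
  | some (x, j) => j < (R.route x).length ∧ j ≤ n ∧
      Follows tb f1 (R.strategy B) v0 (n - j) ((x :: R.route x).take (j + 1)) ∧
      ∃ a : ℕ, n ≤ j + R.maxLength * a ∧
        ((a : ℝ) + 1 - 2 ^ j) * R.unitBid B ≤ (play tb f1 (R.strategy B) v0 n).pay1

variable {B : ℝ} {tb : TieBreak V} {f1 : Strat V} {v0 : V}

lemma invariant_zero :
    R.Invariant B tb f1 v0 0 (R.memory (play tb f1 (R.strategy B) v0 0)) := by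
  show R.Invariant B tb f1 v0 0 (some (v0, 0))
  refine ⟨List.length_pos_iff.mpr (R.route_ne_nil v0), le_rfl, ?_, 0, le_rfl, ?_⟩
  · exact follows_singleton rfl
  · simp [play, Hist.pay1]

lemma invariant_succ_of_none {n : ℕ}
    (hm : R.memory (play tb f1 (R.strategy B) v0 n) = none)
    (hinv : R.Invariant B tb f1 v0 n none) :
    R.Invariant B tb f1 v0 (n + 1) (R.memory (play tb f1 (R.strategy B) v0 (n + 1))) := by
  set h := play tb f1 (R.strategy B) v0 n
  obtain ⟨hbudget, hfollows⟩ := hinv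
  rw [play_succ, memory_extend, hm]
  refine ⟨?_, hfollows⟩
  have hbid2 : (R.strategy B h).1 = 0 := by rw [R.strategy_of_memory_none hm]
  by_cases hw : P1Wins tb f1 (R.strategy B) h
  · rw [play_succ, pay1_extend_of_p1Wins hw]
    linarith [hw.bid_le]
  · rw [play_succ, pay1_extend_of_not_p1Wins hw]
    linarith

lemma invariant_succ_of_p1Wins {n : ℕ} {x : V} {j : ℕ}
    (hm : R.memory (play tb f1 (R.strategy B) v0 n) = some (x, j))
    (hinv : R.Invariant B tb f1 v0 n (some (x, j)))
    (hw : P1Wins tb f1 (R.strategy B) (play tb f1 (R.strategy B) v0 n)) :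
    R.Invariant B tb f1 v0 (n + 1) (R.memory (play tb f1 (R.strategy B) v0 (n + 1))) := by
  set h := play tb f1 (R.strategy B) v0 n
  obtain ⟨hj, -, -, a, hn, hpay⟩ := hinv
  have hbid : 2 ^ j * R.unitBid B ≤ (f1 h).1 := by
    simpa [R.strategy_of_memory_some hm] using hw.bid_le
  rw [play_succ, memory_extend, hm, roundAt_of_p1Wins hw]
  refine ⟨List.length_pos_iff.mpr (R.route_ne_nil _), Nat.zero_le _, ?_, a + 1, ?_, ?_⟩
  · exact follows_singleton ((visit_succ v0 n).trans (by rw [roundAt_of_p1Wins hw]))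
  · have := R.length_route_le x
    rw [Nat.mul_succ]
    omega
  · rw [play_succ, pay1_extend_of_p1Wins hw]
    push_cast
    linarith

lemma invariant_succ_of_not_p1Wins (hB : 0 ≤ B) {n : ℕ} {x : V} {j : ℕ}
    (hm : R.memory (play tb f1 (R.strategy B) v0 n) = some (x, j))
    (hinv : R.Invariant B tb f1 v0 n (some (x, j)))
    (hw : ¬ P1Wins tb f1 (R.strategy B) (play tb f1 (R.strategy B) v0 n)) :
    R.Invariant B tb f1 v0 (n + 1) (R.memory (play tb f1 (R.strategy B) v0 (n + 1))) := by
  set h := play tb f1 (R.strategy B) v0 n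
  obtain ⟨hj, hjn, hfollows, a, hn, hpay⟩ := hinv
  have hround : roundAt tb f1 (R.strategy B) h =
      ⟨(R.route x)[j], 2 ^ j * R.unitBid B, false⟩ := by
    rw [roundAt_of_not_p1Wins hw, R.strategy_of_memory_some hm, List.getD_eq_getElem _ _ hj]
  have hpay' : (play tb f1 (R.strategy B) v0 (n + 1)).pay1 = h.pay1 - 2 ^ j * R.unitBid B := by
    rw [play_succ, pay1_extend_of_not_p1Wins hw, R.strategy_of_memory_some hm]
  have hfollows' : Follows tb f1 (R.strategy B) v0 (n - j) ((x :: R.route x).take (j + 2)) :=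
    hfollows.take_succ (by simpa using hj) <| by
      rw [show n - j + (j + 1) = n + 1 by omega, visit_succ, hround]
      rfl
  have hδ := R.unitBid_nonneg hB
  rw [play_succ, memory_extend, hm, hround]
  by_cases hj' : j + 1 < (R.route x).length
  · simp only [step, Bool.false_eq_true, ↓reduceIte, hj']
    refine ⟨hj', by omega, by rwa [show n + 1 - (j + 1) = n - j by omega], a, by omega, ?_⟩
    rw [hpay', pow_succ]
    nlinarith
  · simp only [step, Bool.false_eq_true, ↓reduceIte, hj']
    refine ⟨?_, x, n - j, ?_⟩
    · have hbound :=
        R.two_pow_mul_unitBid_le hB ((Nat.succ_le_of_lt hj).trans (R.length_route_le x))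
      rw [pow_succ] at hbound
      rw [hpay']
      nlinarith
    · rwa [List.take_of_length_le (by simp; omega)] at hfollows'

lemma invariant_play (hB : 0 ≤ B) (n : ℕ) :
    R.Invariant B tb f1 v0 n (R.memory (play tb f1 (R.strategy B) v0 n)) := by
  induction n with
  | zero => exact R.invariant_zero
  | succ n ih =>
    rcases hm : R.memory (play tb f1 (R.strategy B) v0 n) with _ | ⟨x, j⟩ <;> rw [hm] at ih
    · exact R.invariant_succ_of_none hm ih
    · by_cases hw : P1Wins tb f1 (R.strategy B) (play tb f1 (R.strategy B) v0 n)
      · exact R.invariant_succ_of_p1Wins hm ih hw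
      · exact R.invariant_succ_of_not_p1Wins hB hm ih hw

lemma legal2_strategy (hB : 0 ≤ B) : Legal2 G (R.strategy B) B := by
  intro tb f1 v0 n
  have hinv := R.invariant_play (tb := tb) (f1 := f1) (v0 := v0) hB n
  set h := play tb f1 (R.strategy B) v0 n
  refine ⟨R.strategy_bid_nonneg hB h, ?_⟩
  rw [Hist.pay2, sub_neg_eq_add]
  rcases hm : R.memory h with _ | ⟨x, j⟩ <;> rw [hm] at hinv
  · rw [R.strategy_of_memory_none hm]
    exact ⟨hinv.1, (G.total _).choose_spec⟩
  · obtain ⟨hj, hjn, hfollows, a, -, hpay⟩ := hinv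
    rw [R.strategy_of_memory_some hm, List.getD_eq_getElem _ _ hj]
    constructor
    · have hbound :=
        R.two_pow_mul_unitBid_le hB ((Nat.succ_le_of_lt hj).trans (R.length_route_le x))
      have hδ := R.unitBid_nonneg hB
      rw [pow_succ] at hbound
      nlinarith
    · have hcur : h.cur = (x :: R.route x)[j]'(by simp; omega) := by
        have := hfollows j (by simp; omega)
        rwa [Nat.sub_add_cancel hjn, List.getElem_take] at this
      rw [hcur]
      exact (R.isChain_route x).getElem j (by simpa using hj)

lemma exists_memory_eq_none (hB : 0 < B) (hf1 : Legal1 G f1 (1 - B)) :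
    ∃ n, R.memory (play tb f1 (R.strategy B) v0 n) = none := by
  have hδ : 0 < R.unitBid B := by unfold unitBid; positivity
  refine ⟨R.maxLength * ⌈1 / R.unitBid B⌉₊, ?_⟩
  set n := R.maxLength * ⌈1 / R.unitBid B⌉₊
  have hinv := R.invariant_play (tb := tb) (f1 := f1) (v0 := v0) hB.le n
  rcases hm : R.memory (play tb f1 (R.strategy B) v0 n) with _ | ⟨x, j⟩
  · rfl
  · rw [hm] at hinv
    obtain ⟨hj, -, -, a, hn, hpay⟩ := hinv
    have hjN := (Nat.succ_le_of_lt hj).trans (R.length_route_le x)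
    have hpow := R.two_pow_mul_unitBid_le hB.le (Nat.le_of_succ_le hjN)
    have hpay1 := pay1_play_le (tb := tb) hf1 (R.strategy_bid_nonneg hB.le) v0 n
    have ha : (a : ℝ) < 1 / R.unitBid B := by
      rw [lt_div_iff₀ hδ]
      nlinarith
    have ha' : a + 1 ≤ ⌈1 / R.unitBid B⌉₊ := Nat.lt_ceil.mpr ha
    have := Nat.mul_le_mul_left R.maxLength ha'
    rw [Nat.mul_succ] at this
    omega

theorem exists_strategy_follows_route (hB : 0 < B) (tb : TieBreak V) (v0 : V) :
    ∃ f2 : Strat V, Legal2 G f2 B ∧ ∀ f1 : Strat V, Legal1 G f1 (1 - B) →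
      ∃ x m, Follows tb f1 f2 v0 m (x :: R.route x) := by
  refine ⟨R.strategy B, R.legal2_strategy hB.le, fun f1 hf1 => ?_⟩
  obtain ⟨n, hn⟩ := R.exists_memory_eq_none (tb := tb) (v0 := v0) hB hf1
  have hinv := R.invariant_play (tb := tb) (f1 := f1) (v0 := v0) hB.le n
  rw [hn] at hinv
  exact hinv.2

end RouteSystem

lemma List.IsChain.rel_getD_mod_succ {α : Type*} {E : α → α → Prop} {c : List α}
    (hc : c ≠ []) (hchain : c.IsChain E) (hcycle : E (c.getLast hc) (c.head hc)) (d : α) (j : ℕ) :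
    E (c.getD (j % c.length) d) (c.getD ((j + 1) % c.length) d) := by
  have hL : 0 < c.length := List.length_pos_iff.mpr hc
  have hj : j % c.length < c.length := Nat.mod_lt j hL
  rw [← Nat.mod_add_mod]
  rcases Nat.lt_or_ge (j % c.length + 1) c.length with hlt | hge
  · rw [Nat.mod_eq_of_lt hlt, List.getD_eq_getElem _ _ hj, List.getD_eq_getElem _ _ hlt]
    exact hchain.getElem _ hlt
  · have hlast : j % c.length = c.length - 1 := by omega
    rw [hlast, Nat.sub_add_cancel hL, Nat.mod_self, List.getD_eq_getElem _ _ (by omega),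
      List.getD_eq_getElem _ _ hL, ← List.getLast_eq_getElem hc, ← List.head_eq_getElem_zero hc]
    exact hcycle

lemma List.getD_zero_eq_head {α : Type*} {l : List α} (hl : l ≠ []) (d : α) :
    l.getD 0 d = l.head hl := by
  cases l with
  | nil => exact absurd rfl hl
  | cons a l => rfl

section Cycle

variable {V : Type} [Fintype V] {G : BiddingGame V}

noncomputable def pathTo (hsc : StronglyConnected G) (x y : V) : List V :=
  (List.exists_isChain_cons_of_relationReflTransGen (hsc x y)).choose

lemma isChain_cons_pathTo (hsc : StronglyConnected G) (x y : V) :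
    (x :: pathTo hsc x y).IsChain G.E :=
  (List.exists_isChain_cons_of_relationReflTransGen (hsc x y)).choose_spec.1

lemma getLast_cons_pathTo (hsc : StronglyConnected G) (x y : V) :
    (x :: pathTo hsc x y).getLast (List.cons_ne_nil _ _) = y :=
  (List.exists_isChain_cons_of_relationReflTransGen (hsc x y)).choose_spec.2

-- The extra `+ 1` step keeps every route nonempty.
noncomputable def cycleRoutes (hsc : StronglyConnected G) {c : List V} (hc : c ≠ [])
    (hchain : c.IsChain G.E) (hcycle : G.E (c.getLast hc) (c.head hc)) (d : V) (n : ℕ) :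
    RouteSystem G where
  route x := pathTo hsc x (c.head hc) ++
    (List.range (n + 1)).map fun i => c.getD ((i + 1) % c.length) d
  route_ne_nil x := by simp
  isChain_route x := by
    have hstep := hchain.rel_getD_mod_succ hc hcycle d
    rw [← List.cons_append, List.isChain_append]
    refine ⟨isChain_cons_pathTo hsc x _, ?_, ?_⟩
    · rw [List.isChain_map, List.isChain_range]
      exact fun m _ => hstep (m + 1)
    · intro a ha b hb
      rw [List.getLast?_eq_some_getLast (List.cons_ne_nil _ _), getLast_cons_pathTo,
        Option.mem_some_iff] at ha
      simp only [List.head?_map, List.head?_range, Nat.add_one_ne_zero, if_false,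
        Option.map_some, Option.mem_def, Option.some.injEq, zero_add] at hb
      subst ha hb
      simpa only [Nat.zero_mod, List.getD_zero_eq_head hc] using hstep 0

lemma Follows.visit_cycleRoutes {tb : TieBreak V} {f1 f2 : Strat V} {v0 : V} {m : ℕ}
    (hsc : StronglyConnected G) {c : List V} (hc : c ≠ []) (hchain : c.IsChain G.E)
    (hcycle : G.E (c.getLast hc) (c.head hc)) (d : V) (n : ℕ) {x : V}
    (ht : Follows tb f1 f2 v0 m (x :: (cycleRoutes hsc hc hchain hcycle d n).route x))
    {j : ℕ} (hj : j ≤ n + 1) :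
    visit tb f1 f2 v0 (m + (pathTo hsc x (c.head hc)).length + j) =
      c.getD (j % c.length) d := by
  have := ht ((pathTo hsc x (c.head hc)).length + j) (by simp [cycleRoutes]; omega)
  rw [← add_assoc] at this
  rw [this]
  simp only [cycleRoutes, ← List.cons_append]
  rcases j with _ | i
  · rw [List.getElem_append_left (by simp)]
    have := getLast_cons_pathTo hsc x (c.head hc)
    rw [List.getLast_eq_getElem] at this
    rw [Nat.zero_mod, List.getD_zero_eq_head hc]
    simpa using this
  · rw [List.getElem_append_right (by simp)]
    simp only [List.length_cons, List.getElem_map, List.getElem_range]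
    congr 2
    omega

end Cycle

theorem buchi_no_prompt_winning_general
    {V : Type} [Fintype V] (G : BiddingGame V) (F : Set V)
    (hsc : StronglyConnected G)
    (c : List V) (hc : c ≠ []) (hchain : List.Chain' G.E c)
    (hcycle : G.E (c.getLast hc) (c.head hc)) (hF : ∀ x ∈ c, x ∉ F)
    (k : ℕ) (B : ℝ) (hB0 : 0 < B) (v : V) (tb : TieBreak V) :
    ∃ f2 : Strat V, Legal2 G f2 B ∧
      ∀ f1 : Strat V, Legal1 G f1 (1 - B) →
        ∃ m : ℕ,
          (∀ j < k * c.length, visit tb f1 f2 v (m + j) = c.getD (j % c.length) v) ∧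
          (∀ j < k, visit tb f1 f2 v (m + j) ∉ F) := by
  obtain ⟨f2, hf2, hwin⟩ :=
    (cycleRoutes hsc hc hchain hcycle v (k * c.length)).exists_strategy_follows_route hB0 tb v
  refine ⟨f2, hf2, fun f1 hf1 => ?_⟩
  obtain ⟨x, m, hfollows⟩ := hwin f1 hf1
  have hcycle_visits : ∀ j < k * c.length, visit tb f1 f2 v
      (m + (pathTo hsc x (c.head hc)).length + j) = c.getD (j % c.length) v :=
    fun j hj => hfollows.visit_cycleRoutes hsc hc hchain hcycle v _ (by omega)
  refine ⟨_, hcycle_visits, fun j hj => ?_⟩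
  have hL : 0 < c.length := List.length_pos_iff.mpr hc
  rw [hcycle_visits j (hj.trans_le (Nat.le_mul_of_pos_right k hL)),
    List.getD_eq_getElem _ _ (Nat.mod_lt j hL)]
  exact hF _ (List.getElem_mem _)

/-- In a strongly-connected Büchi bidding game with accepting vertices
`F`, if there is a cycle `c` avoiding `F`, then for every `k` and every strictly
positive initial budget, Player 2 has a strategy forcing the token to traverse the
cycle `c` for `k` consecutive times without visiting `F`; in particular no accepting
vertex is visited for at least `k` rounds. -/
theorem buchi_no_prompt_winning
    {V : Type} [Fintype V] (G : BiddingGame V) (F : Set V)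
    (hsc : StronglyConnected G)
    (c : List V) (hc : c ≠ []) (hchain : List.Chain' G.E c)
    (hcycle : G.E (c.getLast hc) (c.head hc)) (hF : ∀ x ∈ c, x ∉ F)
    (k : ℕ) (B : ℝ) (hB0 : 0 < B) (hB1 : B ≤ 1) (v : V) (tb : TieBreak V) :
    ∃ f2 : Strat V, Legal2 G f2 B ∧
      ∀ f1 : Strat V, Legal1 G f1 (1 - B) →
        ∃ m : ℕ,
          (∀ j < k * c.length, visit tb f1 f2 v (m + j) = c.getD (j % c.length) v) ∧
          (∀ j < k, visit tb f1 f2 v (m + j) ∉ F) :=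
  buchi_no_prompt_winning_general G F hsc c hc hchain hcycle hF k B hB0 v tb
end

section
/- Consider a strongly-connected mean-payoff bidding game G = (V, E, w), a vertex u ∈ V, and N ∈ ℕ, and let f_m be the Min strategy that at every vertex v bids (W(v⁺) − W(v⁻))/(2N) and moves to v⁻ upon winning. For every Max strategy f_M and every finite outcome π of (f_m, f_M) that, regarded as a path in G^u, starts in a vertex v and ends in a vertex v', it holds that W(v) − W(v') ≥ E(π) + N · B_m(π). -/
open scoped Classical

section Round

variable {V : Type} (tb : TieBreak V) (f1 f2 : Strat V) (h : Hist V)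

def P1WinsBid : Prop :=
  (f2 h).1 < (f1 h).1 ∨ ((f1 h).1 = (f2 h).1 ∧ tb h = true)

lemma Hist.cur_mk_append (init : V) (l : List (BidRound V)) (r : BidRound V) :
    (Hist.mk init (l ++ [r])).cur = r.dest := by
  simp [Hist.cur]

lemma Hist.pay1_mk_append (init : V) (l : List (BidRound V)) (r : BidRound V) :
    (Hist.mk init (l ++ [r])).pay1
      = (Hist.mk init l).pay1 + (if r.p1Won then r.bid else -r.bid) := by
  simp [Hist.pay1]

variable {tb f1 f2 h}

lemma extend_of_p1WinsBid (hwin : P1WinsBid tb f1 f2 h) :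
    extend tb f1 f2 h = ⟨h.init, h.rounds ++ [⟨(f1 h).2, (f1 h).1, true⟩]⟩ :=
  if_pos hwin

lemma extend_of_not_p1WinsBid (hwin : ¬P1WinsBid tb f1 f2 h) :
    extend tb f1 f2 h = ⟨h.init, h.rounds ++ [⟨(f2 h).2, (f2 h).1, false⟩]⟩ :=
  if_neg hwin

lemma cur_extend_of_p1WinsBid (hwin : P1WinsBid tb f1 f2 h) :
    (extend tb f1 f2 h).cur = (f1 h).2 := by
  rw [extend_of_p1WinsBid hwin, Hist.cur_mk_append]

lemma pay1_extend_of_p1WinsBid (hwin : P1WinsBid tb f1 f2 h) :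
    (extend tb f1 f2 h).pay1 = h.pay1 + (f1 h).1 := by
  rw [extend_of_p1WinsBid hwin, Hist.pay1_mk_append]
  rfl

lemma cur_extend_of_not_p1WinsBid (hwin : ¬P1WinsBid tb f1 f2 h) :
    (extend tb f1 f2 h).cur = (f2 h).2 := by
  rw [extend_of_not_p1WinsBid hwin, Hist.cur_mk_append]

lemma pay1_extend_of_not_p1WinsBid (hwin : ¬P1WinsBid tb f1 f2 h) :
    (extend tb f1 f2 h).pay1 = h.pay1 - (f2 h).1 := by
  rw [extend_of_not_p1WinsBid hwin, Hist.pay1_mk_append, sub_eq_add_neg]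
  rfl

lemma le_of_not_p1WinsBid (hwin : ¬P1WinsBid tb f1 f2 h) : (f1 h).1 ≤ (f2 h).1 :=
  le_of_not_gt fun hlt => hwin (Or.inl hlt)

end Round

lemma energy_succ {V : Type} (w : V → ℤ) (tb : TieBreak V) (f1 f2 : Strat V) (v0 : V) (n : ℕ) :
    energy w tb f1 f2 v0 (n + 1) = energy w tb f1 f2 v0 n + w (visit tb f1 f2 v0 n) :=
  Finset.sum_range_succ _ _

section SplitGraph

variable {V : Type} [Fintype V] {G : BiddingGame V} {u v : V}

/-- The vertex of `G^u` in which a `G`-edge into `x` ends. -/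
noncomputable def splitTarget (u x : V) : V ⊕ Unit := if x = u then Sum.inr () else Sum.inl x

lemma inl_mem_succu {x : V} : Sum.inl x ∈ succu G u v ↔ G.E v x ∧ x ≠ u := by
  simp only [succu, Finset.mem_filter, Finset.mem_univ, true_and]
  rfl

lemma inr_mem_succu : Sum.inr () ∈ succu G u v ↔ G.E v u := by
  simp only [succu, Finset.mem_filter, Finset.mem_univ, true_and]
  rfl

lemma splitTarget_mem_succu {x : V} (hx : G.E v x) : splitTarget u x ∈ succu G u v := by
  unfold splitTarget
  split_ifs with hxu
  · exact inr_mem_succu.mpr (hxu ▸ hx)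
  · exact inl_mem_succu.mpr ⟨hx, hxu⟩

lemma splitTarget_projU_of_mem_succu {y : V ⊕ Unit} (hy : y ∈ succu G u v) :
    splitTarget u (projU u y) = y := by
  rcases y with x | _
  · simp [splitTarget, projU, (inl_mem_succu.mp hy).2]
  · simp [splitTarget, projU]

end SplitGraph

section MinStrategy

variable {V : Type} [Fintype V] {G : BiddingGame V} {w : V → ℝ} {u : V} {W : V ⊕ Unit → ℝ}
  {N : ℕ} {f1 f2 : Strat V} (tb : TieBreak V) (h : Hist V)

/-- One round of the potential argument: Min's bid is priced so that, whether he wins and moves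
to `v⁻` or Max wins and moves anywhere (at most to `v⁺`), the drop of `W` covers the weight of
the current vertex plus `N` times Min's payment in that round. -/
lemma weight_add_mul_pay1_extend_le
    (hW : ∀ v : V, W (Sum.inl v) = (supWu G u W v + infWu G u W v) / 2 + w v) (hN : 0 < N)
    (hbid : ∀ h : Hist V, (f1 h).1 = (supWu G u W h.cur - infWu G u W h.cur) / (2 * N))
    (hmove : ∀ h : Hist V, ∃ y ∈ succu G u h.cur, W y = infWu G u W h.cur ∧ projU u y = (f1 h).2)
    (hf2 : ∀ h : Hist V, G.E h.cur (f2 h).2) :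
    w h.cur + N * ((extend tb f1 f2 h).pay1 - h.pay1)
      ≤ W (Sum.inl h.cur) - W (splitTarget u (extend tb f1 f2 h).cur) := by
  have hNbid : (N : ℝ) * (f1 h).1 = (supWu G u W h.cur - infWu G u W h.cur) / 2 := by
    rw [hbid h]
    field_simp
  have hWcur := hW h.cur
  by_cases hwin : P1WinsBid tb f1 f2 h
  · obtain ⟨y, hy, hWy, hprojy⟩ := hmove h
    have htarget : splitTarget u (extend tb f1 f2 h).cur = y := by
      rw [cur_extend_of_p1WinsBid hwin, ← hprojy, splitTarget_projU_of_mem_succu hy]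
    rw [pay1_extend_of_p1WinsBid hwin, htarget, hWy]
    linarith
  · have hNle : (N : ℝ) * (f1 h).1 ≤ N * (f2 h).1 :=
      mul_le_mul_of_nonneg_left (le_of_not_p1WinsBid hwin) N.cast_nonneg
    have hWle : W (splitTarget u (extend tb f1 f2 h).cur) ≤ supWu G u W h.cur := by
      rw [cur_extend_of_not_p1WinsBid hwin]
      exact Finset.le_sup' W (splitTarget_mem_succu (hf2 h))
    rw [pay1_extend_of_not_p1WinsBid hwin]
    linarith

end MinStrategy

theorem mp_min_energy_budget_lemma_general
    {V : Type} [Fintype V] (G : BiddingGame V) (w : V → ℤ)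
    (u : V)
    (Wf : V ⊕ Unit → ℝ) (hW : IsWRichman G (fun x => (w x : ℝ)) u Wf)
    (N : ℕ) (hN : 0 < N)
    (f1 : Strat V)
    (hbid : ∀ h : Hist V,
      (f1 h).1 = (supWu G u Wf h.cur - infWu G u Wf h.cur) / (2 * N))
    (hmove : ∀ h : Hist V, ∃ y ∈ succu G u h.cur,
      Wf y = infWu G u Wf h.cur ∧ projU u y = (f1 h).2)
    (f2 : Strat V) (hf2 : ∀ h : Hist V, 0 ≤ (f2 h).1 ∧ G.E h.cur (f2 h).2)
    (tb : TieBreak V) (v0 : V) (n : ℕ)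
    (hmid : ∀ i : ℕ, 0 < i → i < n → visit tb f1 f2 v0 i ≠ u) :
    Wf (Sum.inl v0) -
        (if 0 < n ∧ visit tb f1 f2 v0 n = u then Wf (Sum.inr ())
         else Wf (Sum.inl (visit tb f1 f2 v0 n)))
      ≥ (energy w tb f1 f2 v0 n : ℝ) + N * (play tb f1 f2 v0 n).pay1 := by
  induction n with
  | zero => simp [energy, play, visit, Hist.cur, Hist.pay1]
  | succ n ih =>
    have hprefix := ih fun i hi hin => hmid i hi (hin.trans n.lt_succ_self)
    have hstart : (if 0 < n ∧ visit tb f1 f2 v0 n = u then Wf (Sum.inr ())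
        else Wf (Sum.inl (visit tb f1 f2 v0 n))) = Wf (Sum.inl (visit tb f1 f2 v0 n)) :=
      if_neg fun hn => hmid n hn.1 n.lt_succ_self hn.2
    have hend : (if 0 < n + 1 ∧ visit tb f1 f2 v0 (n + 1) = u then Wf (Sum.inr ())
        else Wf (Sum.inl (visit tb f1 f2 v0 (n + 1))))
          = Wf (splitTarget u (visit tb f1 f2 v0 (n + 1))) := by
      simp [splitTarget, apply_ite Wf]
    have hround : (w (visit tb f1 f2 v0 n) : ℝ)
        + N * ((play tb f1 f2 v0 (n + 1)).pay1 - (play tb f1 f2 v0 n).pay1)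
          ≤ Wf (Sum.inl (visit tb f1 f2 v0 n)) - Wf (splitTarget u (visit tb f1 f2 v0 (n + 1))) :=
      weight_add_mul_pay1_extend_le tb (play tb f1 f2 v0 n) hW.2 hN hbid hmove fun h => (hf2 h).2
    rw [hstart] at hprefix
    rw [hend, energy_succ]
    push_cast
    linarith

/-- Let `f1` be the Min strategy that at every vertex `v` bids
`(W(v⁺) - W(v⁻)) / (2N)` and moves to `v⁻` upon winning (where `v⁺, v⁻` are the
`G^u`-successors maximizing/minimizing `W`). Then for every Max strategy `f2`, every
finite outcome `π` of `(f1, f2)` that, regarded as a path in `G^u`, starts in `v0` and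
ends in `v'` (i.e., does not pass through `u` strictly in between; the final vertex is
`u_t` if it is `u`, the initial vertex is `u_s` if it is `u`) satisfies
`W(v0) - W(v') ≥ E(π) + N · B_m(π)`. -/
theorem mp_min_energy_budget_lemma
    {V : Type} [Fintype V] (G : BiddingGame V) (w : V → ℤ)
    (hsc : StronglyConnected G) (u : V)
    (Wf : V ⊕ Unit → ℝ) (hW : IsWRichman G (fun x => (w x : ℝ)) u Wf)
    (N : ℕ) (hN : 0 < N)
    (f1 : Strat V)
    (hbid : ∀ h : Hist V,
      (f1 h).1 = (supWu G u Wf h.cur - infWu G u Wf h.cur) / (2 * N))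
    (hmove : ∀ h : Hist V, ∃ y ∈ succu G u h.cur,
      Wf y = infWu G u Wf h.cur ∧ projU u y = (f1 h).2)
    (f2 : Strat V) (hf2 : ∀ h : Hist V, 0 ≤ (f2 h).1 ∧ G.E h.cur (f2 h).2)
    (tb : TieBreak V) (v0 : V) (n : ℕ)
    (hmid : ∀ i : ℕ, 0 < i → i < n → visit tb f1 f2 v0 i ≠ u) :
    Wf (Sum.inl v0) -
        (if 0 < n ∧ visit tb f1 f2 v0 n = u then Wf (Sum.inr ())
         else Wf (Sum.inl (visit tb f1 f2 v0 n)))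
      ≥ (energy w tb f1 f2 v0 n : ℝ) + N * (play tb f1 f2 v0 n).pay1 :=
  mp_min_energy_budget_lemma_general G w u Wf hW N hN f1 hbid hmove f2 hf2 tb v0 n hmid
end

section
/- Consider a strongly-connected mean-payoff bidding game G = (V, E, w) and a vertex u ∈ V. Then W(u) = Σ_{v ∈ V} cont(v) · w(v). -/
open scoped Classical

/-
Pair the Richman equation `W(v) - (W(v⁺) + W(v⁻))/2 = w(v)` with `cont(v)` and sum over `V`.
The averaging operator `W ↦ (W(v⁺) + W(v⁻))/2` is adjoint to the operator pushing half of
`cont(v)` to each of `v⁺` and `v⁻`, and the contribution equation says that this push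
reproduces `cont` everywhere except at `u_s`, which has no incoming edges, and at `u_t`,
where `W` vanishes. Hence `Σ cont · w = Σ cont · W - (Σ cont · W - W(u_s)) = W(u_s)`.
-/

section HalfInflow

variable {ι κ R : Type*} [Fintype ι] [DecidableEq κ] [Field R]

def halfInflow (vm vp : ι → κ) (c : ι → R) (y : κ) : R :=
  ∑ v, ((if vm v = y then (1 : R) / 2 else 0) + (if vp v = y then (1 : R) / 2 else 0)) * c v

theorem sum_halfInflow_mul [Fintype κ] (vm vp : ι → κ) (c : ι → R) (g : κ → R) :
    ∑ y, halfInflow vm vp c y * g y = ∑ v, c v * ((g (vm v) + g (vp v)) / 2) := by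
  simp only [halfInflow, Finset.sum_mul]
  rw [Finset.sum_comm]
  refine Finset.sum_congr rfl fun v _ => ?_
  simp only [add_mul, ite_mul, zero_mul, Finset.sum_add_distrib, Finset.sum_ite_eq,
    Finset.mem_univ, if_true]
  ring

theorem halfInflow_eq_zero {vm vp : ι → κ} {y : κ} (hm : ∀ v, vm v ≠ y) (hp : ∀ v, vp v ≠ y)
    (c : ι → R) : halfInflow vm vp c y = 0 :=
  Finset.sum_eq_zero fun v _ => by simp [hm v, hp v]

end HalfInflow

theorem eq_sum_contribution_mul_of_halfInflow {V R : Type*} [Fintype V] [DecidableEq V]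
    [Field R] (u : V) (W cont : V ⊕ Unit → R) (w : V → R) (vm vp : V → V ⊕ Unit)
    (hm : ∀ v, vm v ≠ Sum.inl u) (hp : ∀ v, vp v ≠ Sum.inl u)
    (hW_sink : W (Sum.inr ()) = 0)
    (hW : ∀ v, W (Sum.inl v) = (W (vm v) + W (vp v)) / 2 + w v)
    (hcont_source : cont (Sum.inl u) = 1)
    (hcont : ∀ y, y ≠ Sum.inl u → cont y = halfInflow vm vp (fun v => cont (Sum.inl v)) y) :
    W (Sum.inl u) = ∑ v, cont (Sum.inl v) * w v := by
  set c : V → R := fun v => cont (Sum.inl v)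
  have hinflow : ∀ v, halfInflow vm vp c (Sum.inl v) = c v - if v = u then 1 else 0 := by
    intro v
    by_cases hvu : v = u
    · subst hvu
      simp [halfInflow_eq_zero hm hp, c, hcont_source]
    · simp [hvu, c, ← hcont (Sum.inl v) (by simpa using hvu)]
  have hpush : ∑ y, halfInflow vm vp c y * W y = ∑ v, c v * W (Sum.inl v) - W (Sum.inl u) := by
    simp [Fintype.sum_sum_type, hW_sink, hinflow, sub_mul, Finset.sum_sub_distrib]
  have hpair : ∑ y, halfInflow vm vp c y * W y
      = ∑ v, c v * W (Sum.inl v) - ∑ v, c v * w v := by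
    rw [sum_halfInflow_mul, ← Finset.sum_sub_distrib]
    exact Finset.sum_congr rfl fun v _ => by rw [hW v]; ring
  linear_combination hpush - hpair

theorem inl_source_not_mem_succu {V : Type} [Fintype V] (G : BiddingGame V) (u v : V) :
    Sum.inl u ∉ succu G u v := by
  simp only [succu, Finset.mem_filter, Finset.mem_univ, true_and]
  exact fun h => (show G.E v u ∧ u ≠ u from h).2 rfl

theorem IsWRichman.eq_half_add {V : Type} [Fintype V] {G : BiddingGame V} {w : V → ℝ} {u : V}
    {W : V ⊕ Unit → ℝ} (hW : IsWRichman G w u W) {vp vm : V → V ⊕ Unit}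
    (hvp : ∀ v, W (vp v) = supWu G u W v) (hvm : ∀ v, W (vm v) = infWu G u W v) (v : V) :
    W (Sum.inl v) = (W (vm v) + W (vp v)) / 2 + w v := by
  rw [hW.2 v, hvp, hvm, add_comm (supWu G u W v)]

theorem mp_weighted_richman_eq_contribution_sum_general
    {V : Type} [Fintype V] (G : BiddingGame V) (w : V → ℤ)
    (u : V)
    (Wf : V ⊕ Unit → ℝ) (hW : IsWRichman G (fun x => (w x : ℝ)) u Wf)
    (vp vm : V → V ⊕ Unit)
    (hvp : ∀ v : V, vp v ∈ succu G u v ∧ Wf (vp v) = supWu G u Wf v)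
    (hvm : ∀ v : V, vm v ∈ succu G u v ∧ Wf (vm v) = infWu G u Wf v)
    (cf : V ⊕ Unit → ℝ)
    (hcf0 : cf (Sum.inl u) = 1)
    (hcf : ∀ y : V ⊕ Unit, y ≠ Sum.inl u → cf y =
      ∑ v : V, ((if vm v = y then (1 : ℝ) / 2 else 0) +
                (if vp v = y then (1 : ℝ) / 2 else 0)) * cf (Sum.inl v)) :
    Wf (Sum.inl u) = ∑ v : V, cf (Sum.inl v) * (w v : ℝ) := by
  have avoids_source {s : V → V ⊕ Unit} (hs : ∀ v, s v ∈ succu G u v) (v : V) :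
      s v ≠ Sum.inl u := fun h => inl_source_not_mem_succu G u v (h ▸ hs v)
  exact eq_sum_contribution_mul_of_halfInflow u Wf cf _ vm vp
    (avoids_source fun v => (hvm v).1) (avoids_source fun v => (hvp v).1) hW.1
    (hW.eq_half_add (fun v => (hvp v).2) (fun v => (hvm v).2)) hcf0 hcf

/-- `W(u) = Σ_{v ∈ V} cont(v) · w(v)`. Here `vp`/`vm` select, for each
vertex, `G^u`-successors `v⁺`/`v⁻` maximizing/minimizing `W`; `cf` is the contribution
function on `G^u`, determined by `cont(u_s) = 1` and, for every other vertex `y`,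
`cont(y) = Σ_{v' ∈ pre(y)} ½ · cont(v')` (the two halves coming from `v'⁻` and `v'⁺`);
well-definedness of `W` and `cont` is captured by the hypothesis that `u_t` is reached
from every vertex along the chosen `v⁻`/`v⁺` edges. -/
theorem mp_weighted_richman_eq_contribution_sum
    {V : Type} [Fintype V] (G : BiddingGame V) (w : V → ℤ)
    (hsc : StronglyConnected G) (u : V)
    (Wf : V ⊕ Unit → ℝ) (hW : IsWRichman G (fun x => (w x : ℝ)) u Wf)
    (vp vm : V → V ⊕ Unit)
    (hvp : ∀ v : V, vp v ∈ succu G u v ∧ Wf (vp v) = supWu G u Wf v)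
    (hvm : ∀ v : V, vm v ∈ succu G u v ∧ Wf (vm v) = infWu G u Wf v)
    (cf : V ⊕ Unit → ℝ)
    (hcf0 : cf (Sum.inl u) = 1)
    (hcf : ∀ y : V ⊕ Unit, y ≠ Sum.inl u → cf y =
      ∑ v : V, ((if vm v = y then (1 : ℝ) / 2 else 0) +
                (if vp v = y then (1 : ℝ) / 2 else 0)) * cf (Sum.inl v))
    (hreach : ∀ v : V, Relation.ReflTransGen
      (fun x y => ∃ a : V, x = Sum.inl a ∧ (vm a = y ∨ vp a = y))
      (Sum.inl v) (Sum.inr ())) :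
    Wf (Sum.inl u) = ∑ v : V, cf (Sum.inl v) * (w v : ℝ) :=
  mp_weighted_richman_eq_contribution_sum_general G w u Wf hW vp vm hvp hvm cf hcf0 hcf
end
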